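/- arXiv:2401.12497 — 7 statements merged into one kernel-verified Lean document; each statement's English description precedes it below -/
import Mathlib

section
/- If the reward function R(s,a) depends only on the coordinates of s in a subset P of indices, and A is the set of ancestors of P in the causal graph of the factored transition dynamics (with P ⊆ A), then the transition distribution of the restricted state s^A depends only on s^A and a; i.e., the abstraction φ(s) = s^A yields a well-defined MDP whose dynamics are a function of (s^A, a) alone. -/
/-- In a factored MDP whose transition factorizes over causal parent
sets `Pa`, if the reward depends only on coordinates in `P` and `Anc` is an
ancestor-closed superset of `P`, then the pushforward transition distribution of
the restricted state `s^Anc` depends only on `s^Anc` and the action. -/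
theorem abstraction_dynamics_well_defined
    {d : ℕ} (S : Fin d → Type) [∀ i, Fintype (S i)] [∀ i, DecidableEq (S i)]
    (A : Type) (Pa : Fin d → Finset (Fin d))
    (p : (i : Fin d) → ((j : Fin d) → S j) → A → S i → ℝ)
    (hp0 : ∀ i s a y, 0 ≤ p i s a y)
    (hp1 : ∀ i s a, ∑ y, p i s a y = 1)
    (hPa : ∀ i (s t : (j : Fin d) → S j) (a : A),
      (∀ j ∈ Pa i, s j = t j) → p i s a = p i t a)
    (P Anc : Finset (Fin d)) (hPA : P ⊆ Anc)
    (hclosed : ∀ i ∈ Anc, Pa i ⊆ Anc)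
    (R : ((j : Fin d) → S j) → A → ℝ)
    (hR : ∀ s t a, (∀ j ∈ P, s j = t j) → R s a = R t a)
    (s t : (j : Fin d) → S j) (a : A)
    (hst : ∀ i ∈ Anc, s i = t i) :
    ∀ u : (j : Fin d) → S j,
      (∑ s' ∈ Finset.univ.filter
          (fun s' : (j : Fin d) → S j => ∀ i ∈ Anc, s' i = u i),
        ∏ i, p i s a (s' i))
      = ∑ s' ∈ Finset.univ.filter
          (fun s' : (j : Fin d) → S j => ∀ i ∈ Anc, s' i = u i),
        ∏ i, p i t a (s' i) := by
  intro u
  have key : ∀ (w : (j : Fin d) → S j),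
      (∑ s' ∈ Finset.univ.filter
          (fun s' : (j : Fin d) → S j => ∀ i ∈ Anc, s' i = u i),
        ∏ i, p i w a (s' i))
      = ∏ i, (if i ∈ Anc then p i w a (u i) else 1) := by
    intro w
    have hset : Finset.univ.filter
        (fun s' : (j : Fin d) → S j => ∀ i ∈ Anc, s' i = u i)
        = Fintype.piFinset (fun i => if i ∈ Anc then {u i} else Finset.univ) := by
      ext s'
      simp only [Finset.mem_filter, Finset.mem_univ, true_and, Fintype.mem_piFinset]
      constructor
      · intro h i
        by_cases hi : i ∈ Anc
        · simp [hi, h i hi]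
        · simp [hi]
      · intro h i hi
        simpa [hi] using h i
    rw [hset, ← Finset.prod_univ_sum]
    apply Finset.prod_congr rfl
    intro i _
    by_cases hi : i ∈ Anc
    · simp [hi]
    · simp [hi, hp1 i w a]
  rw [key s, key t]
  apply Finset.prod_congr rfl
  intro i _
  by_cases hi : i ∈ Anc
  · simp only [hi, if_true]
    rw [hPa i s t a (fun j hj => hst j (hclosed i hi hj))]
  · simp [hi]
end

section
/- Let P be the set of state-variable indices on which the reward depends and A the ancestor closure of P in the causal graph of the factored dynamics. Then the abstraction φ(s) = s^A is a bisimulation: any two states s, t with s^A = t^A satisfy R(s,a) = R(t,a) for all actions a, and for every action a the pushforward of T(·|s,a) under φ equals the pushforward of T(·|t,a) under φ. -/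
/-- In a factored MDP, the abstraction `φ(s) = s^Anc` obtained by
restricting to the ancestor closure `Anc` of the reward parents `P` is a
bisimulation: states agreeing on `Anc` have equal rewards for every action and
equal pushforwards of the transition distribution under `φ`. -/
theorem causal_ancestor_abstraction_is_bisimulation
    {d : ℕ} (S : Fin d → Type) [∀ i, Fintype (S i)] [∀ i, DecidableEq (S i)]
    (A : Type) (Pa : Fin d → Finset (Fin d))
    (p : (i : Fin d) → ((j : Fin d) → S j) → A → S i → ℝ)
    (hp0 : ∀ i s a y, 0 ≤ p i s a y)
    (hp1 : ∀ i s a, ∑ y, p i s a y = 1)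
    (hPa : ∀ i (s t : (j : Fin d) → S j) (a : A),
      (∀ j ∈ Pa i, s j = t j) → p i s a = p i t a)
    (P Anc : Finset (Fin d)) (hPA : P ⊆ Anc)
    (hclosed : ∀ i ∈ Anc, Pa i ⊆ Anc)
    (R : ((j : Fin d) → S j) → A → ℝ)
    (hR : ∀ s t a, (∀ j ∈ P, s j = t j) → R s a = R t a)
    (s t : (j : Fin d) → S j) (a : A)
    (hst : ∀ i ∈ Anc, s i = t i) :
    R s a = R t a ∧
    ∀ u : (j : Fin d) → S j,
      (∑ s' ∈ Finset.univ.filter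
          (fun s' : (j : Fin d) → S j => ∀ i ∈ Anc, s' i = u i),
        ∏ i, p i s a (s' i))
      = ∑ s' ∈ Finset.univ.filter
          (fun s' : (j : Fin d) → S j => ∀ i ∈ Anc, s' i = u i),
        ∏ i, p i t a (s' i) := by
  constructor
  · exact hR s t a fun j hj => hst j (hPA hj)
  · intro u
    -- key: the filtered sum equals ∏ i ∈ Anc, p i s a (u i)
    have key : ∀ w : (j : Fin d) → S j,
        (∑ s' ∈ Finset.univ.filter
            (fun s' : (j : Fin d) → S j => ∀ i ∈ Anc, s' i = u i),
          ∏ i, p i w a (s' i)) = ∏ i ∈ Anc, p i w a (u i) := by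
      intro w
      set f : (i : Fin d) → S i → ℝ := fun i y =>
        if i ∈ Anc then (if y = u i then p i w a y else 0) else p i w a y with hf
      have h1 : (∑ s' ∈ Finset.univ.filter
            (fun s' : (j : Fin d) → S j => ∀ i ∈ Anc, s' i = u i),
          ∏ i, p i w a (s' i)) = ∑ s' : (j : Fin d) → S j, ∏ i, f i (s' i) := by
        rw [Finset.sum_filter]
        refine Finset.sum_congr rfl fun s' _ => ?_
        by_cases h : ∀ i ∈ Anc, s' i = u i
        · rw [if_pos h]
          refine Finset.prod_congr rfl fun i _ => ?_
          by_cases hi : i ∈ Anc <;> simp [hf, hi, h i]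
        · rw [if_neg h]
          push_neg at h
          obtain ⟨i, hi, hne⟩ := h
          refine (Finset.prod_eq_zero (Finset.mem_univ i) ?_).symm
          simp [hf, hi, hne]
      rw [h1, ← Fintype.prod_sum]
      rw [← Finset.prod_mul_prod_compl Anc]
      have h2 : ∀ i ∈ Anc, (∑ y, f i y) = p i w a (u i) := by
        intro i hi
        simp [hf, hi]
      have h3 : ∀ i ∈ Ancᶜ, (∑ y, f i y) = 1 := by
        intro i hi
        rw [Finset.mem_compl] at hi
        simp only [hf, if_neg hi]
        exact hp1 i w a
      rw [Finset.prod_congr rfl h2, Finset.prod_congr rfl h3, Finset.prod_const_one,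
        mul_one]
    rw [key s, key t]
    refine Finset.prod_congr rfl fun i hi => ?_
    rw [hPa i s t a fun j hj => hst j (hclosed i hi hj)]
end

section
/- The optimal (population) InfoNCE objective lower-bounds mutual information: for any critic function F(x,y), E[ log( e^{F(x,y)} / ( e^{F(x,y)} + Σ_{n=1}^N e^{F(x, ỹ_n)} ) ) ] + log(N+1) ≤ I(X;Y), where the expectation is over (x,y) drawn from the joint distribution and ỹ_1,…,ỹ_N drawn i.i.d. from the marginal of Y. -/
open Finset

private lemma gibbs {ι : Type} [Fintype ι] (P G : ι → ℝ)
    (hP : ∀ i, 0 < P i) (hG : ∀ i, 0 < G i)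
    (h : ∑ i, G i = ∑ i, P i) :
    0 ≤ ∑ i, P i * Real.log (P i / G i) := by
  have key : ∑ i, P i * Real.log (G i / P i) ≤ 0 := by
    calc ∑ i, P i * Real.log (G i / P i) ≤ ∑ i, (G i - P i) := by
          apply Finset.sum_le_sum
          intro i _
          have hlog := Real.log_le_sub_one_of_pos (div_pos (hG i) (hP i))
          calc P i * Real.log (G i / P i) ≤ P i * (G i / P i - 1) :=
                mul_le_mul_of_nonneg_left hlog (hP i).le
            _ = G i - P i := by
                rw [mul_sub, mul_one, mul_div_cancel₀ _ (hP i).ne']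
      _ = 0 := by rw [Finset.sum_sub_distrib, h, sub_self]
  have heq : ∑ i, P i * Real.log (P i / G i) = - ∑ i, P i * Real.log (G i / P i) := by
    rw [← Finset.sum_neg_distrib]
    apply Finset.sum_congr rfl
    intro i _
    rw [show P i / G i = (G i / P i)⁻¹ from (inv_div _ _).symm, Real.log_inv]
    ring
  rw [heq]
  linarith

private lemma exch {Y : Type} [Fintype Y] (M : ℕ) (w a : Y → ℝ) (j : Fin (M+1)) :
    ∑ g : Fin (M+1) → Y, (∏ k, w (g k)) * (a (g j) / ∑ k, a (g k))
      = ∑ g : Fin (M+1) → Y, (∏ k, w (g k)) * (a (g 0) / ∑ k, a (g k)) := by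
  apply Fintype.sum_equiv (Equiv.arrowCongr (Equiv.swap 0 j) (Equiv.refl Y))
  intro g
  have hmap : ∀ k, (Equiv.arrowCongr (Equiv.swap 0 j) (Equiv.refl Y) g) k
      = g (Equiv.swap 0 j k) := by
    intro k
    simp [Equiv.arrowCongr_apply, Equiv.symm_swap]
  have hprod : (∏ k, w ((Equiv.arrowCongr (Equiv.swap 0 j) (Equiv.refl Y) g) k))
      = ∏ k, w (g k) := by
    simp only [hmap]
    exact Equiv.prod_comp (Equiv.swap 0 j) (fun k => w (g k))
  have hsum : (∑ k, a ((Equiv.arrowCongr (Equiv.swap 0 j) (Equiv.refl Y) g) k))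
      = ∑ k, a (g k) := by
    simp only [hmap]
    exact Equiv.sum_comp (Equiv.swap 0 j) (fun k => a (g k))
  rw [hprod, hsum, hmap 0, Equiv.swap_apply_left]

private lemma exch_total {Y : Type} [Fintype Y] (M : ℕ) (w a : Y → ℝ)
    (ha : ∀ y, 0 < a y) (hwsum : ∑ y, w y = 1) :
    ((M : ℝ)+1) * ∑ g : Fin (M+1) → Y, (∏ k, w (g k)) * (a (g 0) / ∑ k, a (g k)) = 1 := by
  have hY : Nonempty Y := by
    by_contra h
    rw [not_nonempty_iff] at h
    simp [Finset.univ_eq_empty] at hwsum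
  have h1 : ∑ j : Fin (M+1), ∑ g : Fin (M+1) → Y, (∏ k, w (g k)) * (a (g j) / ∑ k, a (g k))
      = ((M : ℝ)+1) * ∑ g : Fin (M+1) → Y, (∏ k, w (g k)) * (a (g 0) / ∑ k, a (g k)) := by
    rw [Finset.sum_congr rfl (fun j _ => exch M w a j), Finset.sum_const, Finset.card_univ,
      Fintype.card_fin, nsmul_eq_mul]
    push_cast
    ring
  rw [← h1, Finset.sum_comm]
  have h2 : ∀ g : Fin (M+1) → Y,
      ∑ j : Fin (M+1), (∏ k, w (g k)) * (a (g j) / ∑ k, a (g k)) = ∏ k, w (g k) := by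
    intro g
    have hS : (0:ℝ) < ∑ k, a (g k) :=
      Finset.sum_pos (fun k _ => ha (g k)) Finset.univ_nonempty
    rw [← Finset.mul_sum, ← Finset.sum_div, div_self hS.ne', mul_one]
  rw [Finset.sum_congr rfl (fun g _ => h2 g), ← Fintype.piFinset_univ, ← Finset.prod_univ_sum]
  simp [hwsum]

/-- The population InfoNCE objective lower-bounds mutual
information: for any critic `F`, the expected InfoNCE score (with `N` negative
samples drawn i.i.d. from the marginal of `Y`) plus `log (N+1)` is at most
`I(X;Y)`. -/
theorem infoNCE_lower_bounds_mutual_information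
    {X Y : Type} [Fintype X] [Fintype Y]
    (p : X → Y → ℝ)
    (hpos : ∀ x y, 0 < p x y)
    (hsum : ∑ x, ∑ y, p x y = 1)
    (F : X → Y → ℝ) (N : ℕ) :
    (∑ x, ∑ y, p x y *
        ∑ yneg : Fin N → Y, (∏ n, ∑ x', p x' (yneg n)) *
          Real.log (Real.exp (F x y) /
            (Real.exp (F x y) + ∑ n, Real.exp (F x (yneg n)))))
      + Real.log (N + 1)
    ≤ ∑ x, ∑ y, p x y *
        Real.log (p x y / ((∑ y', p x y') * (∑ x', p x' y))) := by
  classical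
  -- nonemptiness
  have hX : Nonempty X := by
    by_contra h
    rw [not_nonempty_iff] at h
    simp [Finset.univ_eq_empty] at hsum
  have hY : Nonempty Y := by
    by_contra h
    rw [not_nonempty_iff] at h
    simp [Finset.univ_eq_empty] at hsum
  set qx : X → ℝ := fun x => ∑ y', p x y' with hqx_def
  set qy : Y → ℝ := fun y => ∑ x', p x' y with hqy_def
  have hqxpos : ∀ x, 0 < qx x := fun x =>
    Finset.sum_pos (fun y _ => hpos x y) Finset.univ_nonempty
  have hqypos : ∀ y, 0 < qy y := fun y =>
    Finset.sum_pos (fun x _ => hpos x y) Finset.univ_nonempty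
  have hqxsum : ∑ x, qx x = 1 := hsum
  have hqysum : ∑ y, qy y = 1 := by
    simp only [hqy_def]
    rw [Finset.sum_comm]
    simpa [hqx_def] using hsum
  have hneg : ∑ f : Fin N → Y, ∏ n, qy (f n) = 1 := by
    rw [← Fintype.piFinset_univ, ← Finset.prod_univ_sum]
    simp [hqysum]
  have hprodpos : ∀ f : Fin N → Y, 0 < ∏ n, qy (f n) := fun f =>
    Finset.prod_pos (fun n _ => hqypos (f n))
  have hSpos : ∀ (x : X) (y : Y) (f : Fin N → Y),
      0 < Real.exp (F x y) + ∑ n, Real.exp (F x (f n)) := fun x y f =>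
    add_pos_of_pos_of_nonneg (Real.exp_pos _)
      (Finset.sum_nonneg fun n _ => (Real.exp_pos _).le)
  -- the two distributions on Ω = X × Y × (Fin N → Y)
  set P : X × Y × (Fin N → Y) → ℝ := fun ω => p ω.1 ω.2.1 * ∏ n, qy (ω.2.2 n) with hP_def
  set G : X × Y × (Fin N → Y) → ℝ := fun ω =>
    qx ω.1 * qy ω.2.1 * (∏ n, qy (ω.2.2 n)) *
      (((N : ℝ)+1) * (Real.exp (F ω.1 ω.2.1) /
        (Real.exp (F ω.1 ω.2.1) + ∑ n, Real.exp (F ω.1 (ω.2.2 n))))) with hG_def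
  have hPpos : ∀ ω, 0 < P ω := fun ω => mul_pos (hpos _ _) (hprodpos _)
  have hGpos : ∀ ω, 0 < G ω := by
    intro ω
    apply mul_pos (mul_pos (mul_pos (hqxpos _) (hqypos _)) (hprodpos _))
    apply mul_pos (by positivity)
    exact div_pos (Real.exp_pos _) (hSpos _ _ _)
  have hPsum : ∑ ω, P ω = 1 := by
    rw [Fintype.sum_prod_type]
    calc ∑ x, ∑ z : Y × (Fin N → Y), P (x, z)
        = ∑ x, ∑ y, ∑ f : Fin N → Y, P (x, y, f) := by
          exact Finset.sum_congr rfl fun x _ => Fintype.sum_prod_type _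
      _ = ∑ x, ∑ y, p x y := by
          refine Finset.sum_congr rfl fun x _ => Finset.sum_congr rfl fun y _ => ?_
          simp only [hP_def]
          rw [← Finset.mul_sum, hneg, mul_one]
      _ = 1 := hsum
  have hinner : ∀ x : X, ∑ z : Y × (Fin N → Y),
      qy z.1 * (∏ n, qy (z.2 n)) *
        (((N : ℝ)+1) * (Real.exp (F x z.1) /
          (Real.exp (F x z.1) + ∑ n, Real.exp (F x (z.2 n))))) = 1 := by
    intro x
    have hex := exch_total (Y := Y) N qy (fun y => Real.exp (F x y))
      (fun y => Real.exp_pos _) hqysum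
    calc ∑ z : Y × (Fin N → Y),
        qy z.1 * (∏ n, qy (z.2 n)) *
          (((N : ℝ)+1) * (Real.exp (F x z.1) /
            (Real.exp (F x z.1) + ∑ n, Real.exp (F x (z.2 n)))))
        = ((N : ℝ)+1) * ∑ g : Fin (N+1) → Y,
            (∏ k, qy (g k)) * (Real.exp (F x (g 0)) / ∑ k, Real.exp (F x (g k))) := by
          rw [Finset.mul_sum]
          apply Fintype.sum_equiv (Fin.consEquiv (fun _ : Fin (N+1) => Y))
          intro z
          simp only [Fin.consEquiv_apply, Fin.prod_univ_succ, Fin.sum_univ_succ,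
            Fin.cons_zero, Fin.cons_succ]
          ring
      _ = 1 := hex
  have hGsum : ∑ ω, G ω = 1 := by
    rw [Fintype.sum_prod_type]
    have hx : ∀ x, ∑ z : Y × (Fin N → Y), G (x, z) = qx x := by
      intro x
      have hterm : ∀ z : Y × (Fin N → Y), G (x, z) =
          qx x * (qy z.1 * (∏ n, qy (z.2 n)) *
            (((N : ℝ)+1) * (Real.exp (F x z.1) /
              (Real.exp (F x z.1) + ∑ n, Real.exp (F x (z.2 n)))))) := by
        intro z
        simp only [hG_def]
        ring
      rw [Finset.sum_congr rfl (fun z _ => hterm z), ← Finset.mul_sum, hinner x, mul_one]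
    rw [Finset.sum_congr rfl (fun x _ => hx x)]
    exact hqxsum
  have hmain := gibbs P G hPpos hGpos (hGsum.trans hPsum.symm)
  -- pointwise decomposition of the log ratio
  have hsplit : ∀ ω : X × Y × (Fin N → Y), P ω * Real.log (P ω / G ω)
      = P ω * Real.log (p ω.1 ω.2.1 / (qx ω.1 * qy ω.2.1))
        - P ω * Real.log (Real.exp (F ω.1 ω.2.1) /
            (Real.exp (F ω.1 ω.2.1) + ∑ n, Real.exp (F ω.1 (ω.2.2 n))))
        - P ω * Real.log ((N : ℝ)+1) := by
    intro ω
    obtain ⟨x, y, f⟩ := ω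
    have hA : (0:ℝ) < Real.exp (F x y) := Real.exp_pos _
    have hS := hSpos x y f
    have hratio : P (x, y, f) / G (x, y, f)
        = (p x y / (qx x * qy y)) /
            (Real.exp (F x y) / (Real.exp (F x y) + ∑ n, Real.exp (F x (f n)))) /
            ((N : ℝ)+1) := by
      simp only [hP_def, hG_def]
      have h1 : (∏ n, qy (f n)) ≠ 0 := (hprodpos f).ne'
      have h2 : qx x ≠ 0 := (hqxpos x).ne'
      have h3 : qy y ≠ 0 := (hqypos y).ne'
      have h4 : Real.exp (F x y) ≠ 0 := hA.ne'
      have h5 : (Real.exp (F x y) + ∑ n, Real.exp (F x (f n))) ≠ 0 := hS.ne'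
      have h6 : ((N : ℝ)+1) ≠ 0 := by positivity
      field_simp
    rw [hratio, Real.log_div _ _, Real.log_div _ _]
    · ring
    · exact (div_pos (hpos x y) (mul_pos (hqxpos x) (hqypos y))).ne'
    · exact (div_pos hA hS).ne'
    · exact (div_pos (div_pos (hpos x y) (mul_pos (hqxpos x) (hqypos y)))
        (div_pos hA hS)).ne'
    · positivity
  -- sum the decomposition
  have hsum_split : ∑ ω, P ω * Real.log (P ω / G ω)
      = (∑ ω : X × Y × (Fin N → Y), P ω * Real.log (p ω.1 ω.2.1 / (qx ω.1 * qy ω.2.1)))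
        - (∑ ω : X × Y × (Fin N → Y), P ω * Real.log (Real.exp (F ω.1 ω.2.1) /
            (Real.exp (F ω.1 ω.2.1) + ∑ n, Real.exp (F ω.1 (ω.2.2 n)))))
        - Real.log ((N : ℝ)+1) := by
    rw [Finset.sum_congr rfl (fun ω _ => hsplit ω), Finset.sum_sub_distrib,
      Finset.sum_sub_distrib, ← Finset.sum_mul, hPsum, one_mul]
  have hS1 : ∑ ω : X × Y × (Fin N → Y), P ω * Real.log (p ω.1 ω.2.1 / (qx ω.1 * qy ω.2.1))
      = ∑ x, ∑ y, p x y * Real.log (p x y / (qx x * qy y)) := by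
    rw [Fintype.sum_prod_type]
    refine Finset.sum_congr rfl fun x _ => ?_
    rw [Fintype.sum_prod_type]
    refine Finset.sum_congr rfl fun y _ => ?_
    simp only [hP_def]
    rw [← Finset.sum_mul, ← Finset.mul_sum, hneg, mul_one]
  have hS2 : ∑ ω : X × Y × (Fin N → Y), P ω * Real.log (Real.exp (F ω.1 ω.2.1) /
        (Real.exp (F ω.1 ω.2.1) + ∑ n, Real.exp (F ω.1 (ω.2.2 n))))
      = ∑ x, ∑ y, p x y * ∑ f : Fin N → Y, (∏ n, qy (f n)) *
          Real.log (Real.exp (F x y) /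
            (Real.exp (F x y) + ∑ n, Real.exp (F x (f n)))) := by
    rw [Fintype.sum_prod_type]
    refine Finset.sum_congr rfl fun x _ => ?_
    rw [Fintype.sum_prod_type]
    refine Finset.sum_congr rfl fun y _ => ?_
    rw [Finset.mul_sum]
    refine Finset.sum_congr rfl fun f _ => ?_
    simp only [hP_def]
    ring
  rw [hsum_split, hS1, hS2] at hmain

  linarith
end

section
/- The InfoNCE objective with the optimal critic F*(x,y) = log(p(y|x)/p(y)) satisfies: E[ log( e^{F*(x,y)} / ( (1/(N+1))( e^{F*(x,y)} + Σ_n e^{F*(x,ỹ_n)} ) ) ) ] → I(X;Y) is bounded above by I(X;Y), and moreover for this critic the bound is tight as N → ∞ (the objective converges to I(X;Y)). -/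
open Finset

lemma sum_pi_prod {Y : Type} [Fintype Y] (m : ℕ) (u : Fin m → Y → ℝ) :
    ∑ t : Fin m → Y, ∏ i, u i (t i) = ∏ i, ∑ y, u i y := by
  rw [Finset.prod_univ_sum, Fintype.piFinset_univ]

lemma pi_prod_one {Y : Type} [Fintype Y] (q : Y → ℝ) (hq1 : ∑ y, q y = 1) (m : ℕ) :
    ∑ t : Fin m → Y, ∏ i, q (t i) = 1 := by
  rw [sum_pi_prod m (fun _ y => q y)]
  simp [hq1]

lemma moment_one {Y : Type} [Fintype Y] (q : Y → ℝ) (hq1 : ∑ y, q y = 1)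
    (m : ℕ) (f : Y → ℝ) (j : Fin m) :
    ∑ t : Fin m → Y, (∏ i, q (t i)) * f (t j) = ∑ y, q y * f y := by
  have h1 : ∀ t : Fin m → Y, (∏ i, q (t i)) * f (t j)
      = ∏ i, (q (t i) * if j = i then f (t i) else 1) := by
    intro t
    rw [Finset.prod_mul_distrib, Finset.prod_ite_eq]
    simp
  rw [Finset.sum_congr rfl fun t _ => h1 t,
    sum_pi_prod m (fun i y => q y * if j = i then f y else 1)]
  have h2 : ∀ i : Fin m, (∑ y, q y * if j = i then f y else 1)
      = if j = i then (∑ y, q y * f y) else 1 := by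
    intro i
    split_ifs <;> simp [hq1]
  rw [Finset.prod_congr rfl fun i _ => h2 i, Finset.prod_ite_eq]
  simp

lemma moment_two {Y : Type} [Fintype Y] (q : Y → ℝ) (hq1 : ∑ y, q y = 1)
    (m : ℕ) (f g : Y → ℝ) (j k : Fin m) (hjk : j ≠ k) :
    ∑ t : Fin m → Y, (∏ i, q (t i)) * (f (t j) * g (t k))
      = (∑ y, q y * f y) * (∑ y, q y * g y) := by
  have h1 : ∀ t : Fin m → Y, (∏ i, q (t i)) * (f (t j) * g (t k))
      = ∏ i, (q (t i) * ((if j = i then f (t i) else 1) * (if k = i then g (t i) else 1))) := by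
    intro t
    simp only [Finset.prod_mul_distrib, Finset.prod_ite_eq]
    simp
  rw [Finset.sum_congr rfl fun t _ => h1 t,
    sum_pi_prod m (fun i y => q y * ((if j = i then f y else 1) * (if k = i then g y else 1)))]
  have h2 : ∀ i : Fin m, (∑ y, q y * ((if j = i then f y else 1) * (if k = i then g y else 1)))
      = (if j = i then (∑ y, q y * f y) else 1) * (if k = i then (∑ y, q y * g y) else 1) := by
    intro i
    split_ifs with hj hk
    · exact absurd (hj.trans hk.symm) hjk
    · simp [hq1]
    · simp [hq1]
    · simp [hq1]
  rw [Finset.prod_congr rfl fun i _ => h2 i, Finset.prod_mul_distrib,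
    Finset.prod_ite_eq, Finset.prod_ite_eq]
  simp

lemma swap_coord {Y : Type} [Fintype Y] (q ρ : Y → ℝ) (m : ℕ) (G : ℝ → ℝ) (j k : Fin m) :
    ∑ t : Fin m → Y, (∏ i, q (t i)) * (ρ (t k) * G (∑ i, ρ (t i)))
      = ∑ t : Fin m → Y, (∏ i, q (t i)) * (ρ (t j) * G (∑ i, ρ (t i))) := by
  have := Equiv.sum_comp (Equiv.arrowCongr (Equiv.swap j k) (Equiv.refl Y))
    (fun t : Fin m → Y => (∏ i, q (t i)) * (ρ (t k) * G (∑ i, ρ (t i))))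
  rw [← this]
  refine Finset.sum_congr rfl fun t _ => ?_
  have happ : ∀ i, (Equiv.arrowCongr (Equiv.swap j k) (Equiv.refl Y)) t i
      = t (Equiv.swap j k i) := by
    intro i
    simp [Equiv.arrowCongr]
  simp only [happ]
  rw [Equiv.prod_comp (Equiv.swap j k) (fun i => q (t i)),
    Equiv.sum_comp (Equiv.swap j k) (fun i => ρ (t i)), Equiv.swap_apply_right]

lemma mul_log_ge (a : ℝ) (ha : 0 < a) : a - 1 ≤ a * Real.log a := by
  have h := Real.log_le_sub_one_of_pos (inv_pos.2 ha)
  rw [Real.log_inv] at h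
  have h2 : 1 - a⁻¹ ≤ Real.log a := by linarith
  have h3 := mul_le_mul_of_nonneg_left h2 ha.le
  rw [mul_sub, mul_inv_cancel₀ (ne_of_gt ha)] at h3
  linarith

lemma mul_log_le (a : ℝ) (ha : 0 < a) : a * Real.log a ≤ a ^ 2 - a := by
  have h := Real.log_le_sub_one_of_pos ha
  have h3 := mul_le_mul_of_nonneg_left h ha.le
  nlinarith

lemma per_x {Y : Type} [Fintype Y] (q ρ : Y → ℝ) (hq : ∀ y, 0 < q y)
    (hq1 : ∑ y, q y = 1) (hρ : ∀ y, 0 < ρ y) (hρ1 : ∑ y, q y * ρ y = 1) (N : ℕ) :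
    0 ≤ (∑ y, (q y * ρ y) * ∑ yneg : Fin N → Y, (∏ n, q (yneg n)) *
        Real.log ((ρ y + ∑ n, ρ (yneg n)) / (↑N + 1))) ∧
    (∑ y, (q y * ρ y) * ∑ yneg : Fin N → Y, (∏ n, q (yneg n)) *
        Real.log ((ρ y + ∑ n, ρ (yneg n)) / (↑N + 1)))
      ≤ ((∑ y, q y * ρ y ^ 2) - 1) / (↑N + 1) := by
  have hN : (0:ℝ) < (N:ℝ) + 1 := by positivity
  have hs : ∀ t : Fin (N+1) → Y, 0 < ∑ i, ρ (t i) :=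
    fun t => Finset.sum_pos (fun i _ => hρ _) univ_nonempty
  have hw : ∀ t : Fin (N+1) → Y, 0 ≤ ∏ i, q (t i) :=
    fun t => Finset.prod_nonneg (fun i _ => (hq _).le)
  -- step 1: reduce the (y, yneg) sum to a sum over tuples t : Fin (N+1) → Y
  have step1 : (∑ y, (q y * ρ y) * ∑ yneg : Fin N → Y, (∏ n, q (yneg n)) *
        Real.log ((ρ y + ∑ n, ρ (yneg n)) / (↑N + 1)))
      = ∑ t : Fin (N+1) → Y, (∏ i, q (t i)) *
          (ρ (t 0) * Real.log ((∑ i, ρ (t i)) / (↑N + 1))) := by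
    rw [← Equiv.sum_comp (Fin.consEquiv (fun _ : Fin (N+1) => Y))
      (fun t : Fin (N+1) → Y => (∏ i, q (t i)) *
          (ρ (t 0) * Real.log ((∑ i, ρ (t i)) / (↑N + 1)))), Fintype.sum_prod_type]
    refine Finset.sum_congr rfl fun y _ => ?_
    rw [Finset.mul_sum]
    refine Finset.sum_congr rfl fun yneg _ => ?_
    simp only [Fin.consEquiv_apply, Fin.prod_univ_succ, Fin.sum_univ_succ,
      Fin.cons_zero, Fin.cons_succ]
    ring
  -- step 2: symmetrization
  have step2 : (∑ t : Fin (N+1) → Y, (∏ i, q (t i)) *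
          (ρ (t 0) * Real.log ((∑ i, ρ (t i)) / (↑N + 1))))
      = ∑ t : Fin (N+1) → Y, (∏ i, q (t i)) *
          (((∑ i, ρ (t i)) / (↑N + 1)) * Real.log ((∑ i, ρ (t i)) / (↑N + 1))) := by
    have h2 : ((N:ℝ) + 1) * (∑ t : Fin (N+1) → Y, (∏ i, q (t i)) *
          (ρ (t 0) * Real.log ((∑ i, ρ (t i)) / (↑N + 1))))
        = ∑ t : Fin (N+1) → Y, (∏ i, q (t i)) *
          ((∑ i, ρ (t i)) * Real.log ((∑ i, ρ (t i)) / (↑N + 1))) := by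
      calc ((N:ℝ) + 1) * (∑ t : Fin (N+1) → Y, (∏ i, q (t i)) *
              (ρ (t 0) * Real.log ((∑ i, ρ (t i)) / (↑N + 1))))
          = ∑ k : Fin (N+1), ∑ t : Fin (N+1) → Y, (∏ i, q (t i)) *
              (ρ (t k) * Real.log ((∑ i, ρ (t i)) / (↑N + 1))) := by
            rw [Finset.sum_congr rfl fun k _ =>
              swap_coord q ρ (N+1) (fun a => Real.log (a / (↑N + 1))) 0 k]
            rw [Finset.sum_const, Finset.card_univ, Fintype.card_fin, nsmul_eq_mul]
            norm_cast
        _ = _ := by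
            rw [Finset.sum_comm]
            refine Finset.sum_congr rfl fun t _ => ?_
            rw [← Finset.mul_sum, ← Finset.sum_mul]
    have h3 : ∑ t : Fin (N+1) → Y, (∏ i, q (t i)) *
          (((∑ i, ρ (t i)) / (↑N + 1)) * Real.log ((∑ i, ρ (t i)) / (↑N + 1)))
        = (∑ t : Fin (N+1) → Y, (∏ i, q (t i)) *
          ((∑ i, ρ (t i)) * Real.log ((∑ i, ρ (t i)) / (↑N + 1)))) / (↑N + 1) := by
      rw [Finset.sum_div]
      refine Finset.sum_congr rfl fun t _ => ?_
      field_simp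
    rw [h3, ← h2]
    field_simp
  -- moments
  have hM1 : ∑ t : Fin (N+1) → Y, (∏ i, q (t i)) * (∑ i, ρ (t i)) = (N:ℝ) + 1 := by
    calc ∑ t : Fin (N+1) → Y, (∏ i, q (t i)) * (∑ i, ρ (t i))
        = ∑ t : Fin (N+1) → Y, ∑ k : Fin (N+1), (∏ i, q (t i)) * ρ (t k) := by
          refine Finset.sum_congr rfl fun t _ => ?_
          rw [Finset.mul_sum]
      _ = ∑ k : Fin (N+1), ∑ t : Fin (N+1) → Y, (∏ i, q (t i)) * ρ (t k) :=
          Finset.sum_comm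
      _ = ∑ k : Fin (N+1), (1:ℝ) := by
          refine Finset.sum_congr rfl fun k _ => ?_
          rw [moment_one q hq1 (N+1) ρ k, hρ1]
      _ = (N:ℝ) + 1 := by simp
  have hM2 : ∑ t : Fin (N+1) → Y, (∏ i, q (t i)) * (∑ i, ρ (t i)) ^ 2
      = ((N:ℝ) + 1) * ((∑ y, q y * ρ y ^ 2) + N) := by
    have hjk : ∀ (j k : Fin (N+1)),
        ∑ t : Fin (N+1) → Y, (∏ i, q (t i)) * (ρ (t j) * ρ (t k))
          = if j = k then (∑ y, q y * ρ y ^ 2) else 1 := by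
      intro j k
      by_cases h : j = k
      · subst h
        rw [if_pos rfl, moment_one q hq1 (N+1) (fun y => ρ y * ρ y) j]
        refine Finset.sum_congr rfl fun y _ => ?_
        ring
      · rw [if_neg h, moment_two q hq1 (N+1) ρ ρ j k h, hρ1, one_mul]
    calc ∑ t : Fin (N+1) → Y, (∏ i, q (t i)) * (∑ i, ρ (t i)) ^ 2
        = ∑ t : Fin (N+1) → Y, ∑ j : Fin (N+1), ∑ k : Fin (N+1),
            (∏ i, q (t i)) * (ρ (t j) * ρ (t k)) := by
          refine Finset.sum_congr rfl fun t _ => ?_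
          rw [sq, Finset.sum_mul_sum]
          rw [Finset.mul_sum]
          refine Finset.sum_congr rfl fun j _ => ?_
          rw [Finset.mul_sum]
      _ = ∑ j : Fin (N+1), ∑ k : Fin (N+1), ∑ t : Fin (N+1) → Y,
            (∏ i, q (t i)) * (ρ (t j) * ρ (t k)) := by
          rw [Finset.sum_comm]
          refine Finset.sum_congr rfl fun j _ => Finset.sum_comm
      _ = ∑ j : Fin (N+1), ∑ k : Fin (N+1),
            (if j = k then (∑ y, q y * ρ y ^ 2) else 1) := by
          refine Finset.sum_congr rfl fun j _ => Finset.sum_congr rfl fun k _ => hjk j k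
      _ = ((N:ℝ) + 1) * ((∑ y, q y * ρ y ^ 2) + N) := by
          have hrow : ∀ j : Fin (N+1), ∑ k : Fin (N+1),
              (if j = k then (∑ y, q y * ρ y ^ 2) else (1:ℝ))
                = (∑ y, q y * ρ y ^ 2) + N := by
            intro j
            have hpt : ∀ k : Fin (N+1), (if j = k then (∑ y, q y * ρ y ^ 2) else (1:ℝ))
                = (if j = k then ((∑ y, q y * ρ y ^ 2) - 1) else 0) + 1 := by
              intro k
              split_ifs <;> ring
            rw [Finset.sum_congr rfl fun k _ => hpt k, Finset.sum_add_distrib,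
              Finset.sum_ite_eq, if_pos (Finset.mem_univ j)]
            simp
          rw [Finset.sum_congr rfl fun j _ => hrow j, Finset.sum_const,
            Finset.card_univ, Fintype.card_fin, nsmul_eq_mul]
          push_cast
          ring
  have hsum1 := pi_prod_one q hq1 (N+1)
  rw [step1, step2]
  constructor
  · -- lower bound
    have hlow : ∑ t : Fin (N+1) → Y, (∏ i, q (t i)) * (((∑ i, ρ (t i)) / (↑N + 1)) - 1)
        ≤ ∑ t : Fin (N+1) → Y, (∏ i, q (t i)) *
          (((∑ i, ρ (t i)) / (↑N + 1)) * Real.log ((∑ i, ρ (t i)) / (↑N + 1))) := by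
      refine Finset.sum_le_sum fun t _ => ?_
      exact mul_le_mul_of_nonneg_left (mul_log_ge _ (div_pos (hs t) hN)) (hw t)
    have hzero : ∑ t : Fin (N+1) → Y, (∏ i, q (t i)) * (((∑ i, ρ (t i)) / (↑N + 1)) - 1)
        = 0 := by
      have : ∀ t : Fin (N+1) → Y, (∏ i, q (t i)) * (((∑ i, ρ (t i)) / (↑N + 1)) - 1)
          = ((∏ i, q (t i)) * (∑ i, ρ (t i))) / (↑N + 1) - (∏ i, q (t i)) := by
        intro t; field_simp
      rw [Finset.sum_congr rfl fun t _ => this t, Finset.sum_sub_distrib,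
        ← Finset.sum_div, hM1, hsum1]
      field_simp
      norm_num
    linarith
  · -- upper bound
    have hup : ∑ t : Fin (N+1) → Y, (∏ i, q (t i)) *
          (((∑ i, ρ (t i)) / (↑N + 1)) * Real.log ((∑ i, ρ (t i)) / (↑N + 1)))
        ≤ ∑ t : Fin (N+1) → Y, (∏ i, q (t i)) *
          (((∑ i, ρ (t i)) / (↑N + 1)) ^ 2 - ((∑ i, ρ (t i)) / (↑N + 1))) := by
      refine Finset.sum_le_sum fun t _ => ?_
      exact mul_le_mul_of_nonneg_left (mul_log_le _ (div_pos (hs t) hN)) (hw t)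
    have hval : ∑ t : Fin (N+1) → Y, (∏ i, q (t i)) *
          (((∑ i, ρ (t i)) / (↑N + 1)) ^ 2 - ((∑ i, ρ (t i)) / (↑N + 1)))
        = ((∑ y, q y * ρ y ^ 2) - 1) / (↑N + 1) := by
      have hpt : ∀ t : Fin (N+1) → Y, (∏ i, q (t i)) *
            (((∑ i, ρ (t i)) / (↑N + 1)) ^ 2 - ((∑ i, ρ (t i)) / (↑N + 1)))
          = ((∏ i, q (t i)) * (∑ i, ρ (t i)) ^ 2) / ((↑N + 1) ^ 2)
            - ((∏ i, q (t i)) * (∑ i, ρ (t i))) / (↑N + 1) := by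
        intro t; field_simp
      rw [Finset.sum_congr rfl fun t _ => hpt t, Finset.sum_sub_distrib,
        ← Finset.sum_div, ← Finset.sum_div, hM1, hM2]
      field_simp
      ring
    linarith

lemma pi_prod_one' {Y : Type} [Fintype Y] (q : Y → ℝ) (hq1 : ∑ y, q y = 1) (m : ℕ) :
    ∑ t : Fin m → Y, ∏ i, q (t i) = 1 := by
  rw [show (∑ t : Fin m → Y, ∏ i, q (t i)) = ∏ i : Fin m, ∑ y, q y by
    rw [Finset.prod_univ_sum, Fintype.piFinset_univ]]
  simp [hq1]

lemma master {X Y : Type} [Fintype X] [Fintype Y]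
    (p : X → Y → ℝ) (q : Y → ℝ) (P : X → ℝ) (r : X → Y → ℝ) (F : X → Y → ℝ)
    (hq1 : ∑ y, q y = 1)
    (hr : ∀ x y, 0 < r x y)
    (hpr : ∀ x y, p x y = P x * (q y * r x y))
    (hexp : ∀ x y, Real.exp (F x y) = r x y)
    (N : ℕ) :
    (∑ x, ∑ y, p x y * ∑ yneg : Fin N → Y, (∏ n, q (yneg n)) *
        Real.log (Real.exp (F x y) / ((1 / (↑N + 1)) *
          (Real.exp (F x y) + ∑ n, Real.exp (F x (yneg n))))))
    = (∑ x, ∑ y, p x y * Real.log (r x y))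
      - ∑ x, P x * ∑ y, (q y * r x y) * ∑ yneg : Fin N → Y, (∏ n, q (yneg n)) *
          Real.log ((r x y + ∑ n, r x (yneg n)) / (↑N + 1)) := by
  have hN : (0:ℝ) < (N:ℝ) + 1 := by positivity
  have hlog : ∀ (x : X) (y : Y) (yneg : Fin N → Y),
      Real.log (Real.exp (F x y) / ((1 / (↑N + 1)) *
          (Real.exp (F x y) + ∑ n, Real.exp (F x (yneg n)))))
      = Real.log (r x y) - Real.log ((r x y + ∑ n, r x (yneg n)) / (↑N + 1)) := by
    intro x y yneg
    have hsp : 0 < r x y + ∑ n, r x (yneg n) :=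
      add_pos_of_pos_of_nonneg (hr x y) (Finset.sum_nonneg fun n _ => (hr _ _).le)
    simp only [hexp]
    rw [show (1 / ((N:ℝ) + 1)) * (r x y + ∑ n, r x (yneg n))
        = (r x y + ∑ n, r x (yneg n)) / ((N:ℝ) + 1) by ring]
    exact Real.log_div (ne_of_gt (hr x y)) (ne_of_gt (div_pos hsp hN))
  calc (∑ x, ∑ y, p x y * ∑ yneg : Fin N → Y, (∏ n, q (yneg n)) *
        Real.log (Real.exp (F x y) / ((1 / (↑N + 1)) *
          (Real.exp (F x y) + ∑ n, Real.exp (F x (yneg n))))))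
      = ∑ x, ∑ y, p x y * (Real.log (r x y)
          - ∑ yneg : Fin N → Y, (∏ n, q (yneg n)) *
              Real.log ((r x y + ∑ n, r x (yneg n)) / (↑N + 1))) := by
        refine Finset.sum_congr rfl fun x _ => Finset.sum_congr rfl fun y _ => ?_
        congr 1
        calc (∑ yneg : Fin N → Y, (∏ n, q (yneg n)) *
              Real.log (Real.exp (F x y) / ((1 / (↑N + 1)) *
                (Real.exp (F x y) + ∑ n, Real.exp (F x (yneg n))))))
            = ∑ yneg : Fin N → Y, ((∏ n, q (yneg n)) * Real.log (r x y)
                - (∏ n, q (yneg n)) *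
                  Real.log ((r x y + ∑ n, r x (yneg n)) / (↑N + 1))) := by
              refine Finset.sum_congr rfl fun yneg _ => ?_
              rw [hlog x y yneg, mul_sub]
          _ = (∑ yneg : Fin N → Y, ∏ n, q (yneg n)) * Real.log (r x y)
                - ∑ yneg : Fin N → Y, (∏ n, q (yneg n)) *
                  Real.log ((r x y + ∑ n, r x (yneg n)) / (↑N + 1)) := by
              rw [Finset.sum_sub_distrib, Finset.sum_mul]
          _ = Real.log (r x y)
                - ∑ yneg : Fin N → Y, (∏ n, q (yneg n)) *
                  Real.log ((r x y + ∑ n, r x (yneg n)) / (↑N + 1)) := by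
              rw [pi_prod_one' q hq1 N, one_mul]
    _ = _ := by
        simp only [mul_sub, Finset.sum_sub_distrib]
        congr 1
        refine Finset.sum_congr rfl fun x _ => ?_
        rw [Finset.mul_sum]
        refine Finset.sum_congr rfl fun y _ => ?_
        rw [hpr x y]
        ring

/-- With the optimal critic `F*(x,y) = log(p(y|x)/p(y))`, the
InfoNCE objective (with the `1/(N+1)` normalization in the denominator) is
bounded above by `I(X;Y)` for every `N`, and it converges to `I(X;Y)` as
`N → ∞`. -/
theorem infoNCE_optimal_critic_tight
    {X Y : Type} [Fintype X] [Fintype Y]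
    (p : X → Y → ℝ)
    (hpos : ∀ x y, 0 < p x y)
    (hsum : ∑ x, ∑ y, p x y = 1)
    (Fstar : X → Y → ℝ)
    (hFstar : ∀ x y, Fstar x y =
      Real.log ((p x y / ∑ y', p x y') / ∑ x', p x' y)) :
    (∀ N : ℕ,
      (∑ x, ∑ y, p x y *
          ∑ yneg : Fin N → Y, (∏ n, ∑ x', p x' (yneg n)) *
            Real.log (Real.exp (Fstar x y) /
              ((1 / (N + 1)) *
                (Real.exp (Fstar x y) + ∑ n, Real.exp (Fstar x (yneg n))))))
        ≤ ∑ x, ∑ y, p x y *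
            Real.log (p x y / ((∑ y', p x y') * (∑ x', p x' y)))) ∧
    Filter.Tendsto
      (fun N : ℕ =>
        ∑ x, ∑ y, p x y *
          ∑ yneg : Fin N → Y, (∏ n, ∑ x', p x' (yneg n)) *
            Real.log (Real.exp (Fstar x y) /
              ((1 / (N + 1)) *
                (Real.exp (Fstar x y) + ∑ n, Real.exp (Fstar x (yneg n))))))
      Filter.atTop
      (nhds (∑ x, ∑ y, p x y *
          Real.log (p x y / ((∑ y', p x y') * (∑ x', p x' y))))) := by
  -- nonemptiness
  have hX : Nonempty X := by
    by_contra h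
    rw [not_nonempty_iff] at h
    simp at hsum
  have hY : Nonempty Y := by
    by_contra h
    rw [not_nonempty_iff] at h
    simp at hsum
  -- basic positivity
  have hQpos : ∀ y, 0 < ∑ x', p x' y :=
    fun y => Finset.sum_pos (fun x _ => hpos x y) univ_nonempty
  have hPpos : ∀ x, 0 < ∑ y', p x y' :=
    fun x => Finset.sum_pos (fun y _ => hpos x y) univ_nonempty
  have hq1 : ∑ y, ∑ x', p x' y = 1 := by rw [Finset.sum_comm]; exact hsum
  have hrpos : ∀ x y, 0 < p x y / ((∑ y', p x y') * (∑ x', p x' y)) :=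
    fun x y => div_pos (hpos x y) (mul_pos (hPpos x) (hQpos y))
  have hpr : ∀ x y, p x y = (∑ y', p x y') *
      ((∑ x', p x' y) * (p x y / ((∑ y', p x y') * (∑ x', p x' y)))) := by
    intro x y
    have h1 : (∑ y', p x y') ≠ 0 := ne_of_gt (hPpos x)
    have h2 : (∑ x', p x' y) ≠ 0 := ne_of_gt (hQpos y)
    field_simp
  have hexp : ∀ x y, Real.exp (Fstar x y)
      = p x y / ((∑ y', p x y') * (∑ x', p x' y)) := by
    intro x y
    rw [hFstar x y, div_div]
    exact Real.exp_log (hrpos x y)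
  have hr1 : ∀ x, ∑ y, (∑ x', p x' y) *
      (p x y / ((∑ y', p x y') * (∑ x', p x' y))) = 1 := by
    intro x
    have hpt : ∀ y, (∑ x', p x' y) * (p x y / ((∑ y', p x y') * (∑ x', p x' y)))
        = p x y / (∑ y', p x y') := by
      intro y
      have h1 : (∑ y', p x y') ≠ 0 := ne_of_gt (hPpos x)
      have h2 : (∑ x', p x' y) ≠ 0 := ne_of_gt (hQpos y)
      field_simp
    rw [Finset.sum_congr rfl fun y _ => hpt y, ← Finset.sum_div,
      div_self (ne_of_gt (hPpos x))]
  -- master rewriting of the objective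
  have key : ∀ N : ℕ,
      (∑ x, ∑ y, p x y *
        ∑ yneg : Fin N → Y, (∏ n, ∑ x', p x' (yneg n)) *
          Real.log (Real.exp (Fstar x y) /
            ((1 / (N + 1)) *
              (Real.exp (Fstar x y) + ∑ n, Real.exp (Fstar x (yneg n))))))
      = (∑ x, ∑ y, p x y *
          Real.log (p x y / ((∑ y', p x y') * (∑ x', p x' y))))
        - ∑ x, (∑ y', p x y') * ∑ y,
            ((∑ x', p x' y) * (p x y / ((∑ y', p x y') * (∑ x', p x' y)))) *
            ∑ yneg : Fin N → Y, (∏ n, ∑ x', p x' (yneg n)) *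
              Real.log (((p x y / ((∑ y', p x y') * (∑ x', p x' y)))
                + ∑ n, p x (yneg n) / ((∑ y', p x y') * (∑ x', p x' (yneg n))))
                / (↑N + 1)) := by
    intro N
    exact master p (fun y => ∑ x', p x' y) (fun x => ∑ y', p x y')
      (fun x y => p x y / ((∑ y', p x y') * (∑ x', p x' y))) Fstar
      hq1 hrpos hpr hexp N
  -- per-x bounds on the correction term
  have hper : ∀ (x : X) (N : ℕ),
      0 ≤ (∑ y, ((∑ x', p x' y) * (p x y / ((∑ y', p x y') * (∑ x', p x' y)))) *
            ∑ yneg : Fin N → Y, (∏ n, ∑ x', p x' (yneg n)) *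
              Real.log (((p x y / ((∑ y', p x y') * (∑ x', p x' y)))
                + ∑ n, p x (yneg n) / ((∑ y', p x y') * (∑ x', p x' (yneg n))))
                / (↑N + 1))) ∧
      (∑ y, ((∑ x', p x' y) * (p x y / ((∑ y', p x y') * (∑ x', p x' y)))) *
            ∑ yneg : Fin N → Y, (∏ n, ∑ x', p x' (yneg n)) *
              Real.log (((p x y / ((∑ y', p x y') * (∑ x', p x' y)))
                + ∑ n, p x (yneg n) / ((∑ y', p x y') * (∑ x', p x' (yneg n))))
                / (↑N + 1)))
        ≤ ((∑ y, (∑ x', p x' y) *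
            (p x y / ((∑ y', p x y') * (∑ x', p x' y))) ^ 2) - 1) / (↑N + 1) := by
    intro x N
    exact per_x (fun y => ∑ x', p x' y)
      (fun y => p x y / ((∑ y', p x y') * (∑ x', p x' y)))
      (fun y => hQpos y) hq1 (fun y => hrpos x y) (hr1 x) N
  -- the correction term and its bounds
  have hD0 : ∀ N : ℕ, 0 ≤ ∑ x, (∑ y', p x y') * ∑ y,
      ((∑ x', p x' y) * (p x y / ((∑ y', p x y') * (∑ x', p x' y)))) *
      ∑ yneg : Fin N → Y, (∏ n, ∑ x', p x' (yneg n)) *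
        Real.log (((p x y / ((∑ y', p x y') * (∑ x', p x' y)))
          + ∑ n, p x (yneg n) / ((∑ y', p x y') * (∑ x', p x' (yneg n))))
          / (↑N + 1)) := by
    intro N
    exact Finset.sum_nonneg fun x _ =>
      mul_nonneg (hPpos x).le (hper x N).1
  have hDub : ∀ N : ℕ, (∑ x, (∑ y', p x y') * ∑ y,
      ((∑ x', p x' y) * (p x y / ((∑ y', p x y') * (∑ x', p x' y)))) *
      ∑ yneg : Fin N → Y, (∏ n, ∑ x', p x' (yneg n)) *
        Real.log (((p x y / ((∑ y', p x y') * (∑ x', p x' y)))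
          + ∑ n, p x (yneg n) / ((∑ y', p x y') * (∑ x', p x' (yneg n))))
          / (↑N + 1)))
      ≤ (∑ x, (∑ y', p x y') * ((∑ y, (∑ x', p x' y) *
          (p x y / ((∑ y', p x y') * (∑ x', p x' y))) ^ 2) - 1)) / (↑N + 1) := by
    intro N
    rw [Finset.sum_div]
    refine Finset.sum_le_sum fun x _ => ?_
    rw [mul_div_assoc]
    exact mul_le_mul_of_nonneg_left (hper x N).2 (hPpos x).le
  constructor
  · -- upper bound by the mutual information
    intro N
    rw [key N]
    have := hD0 N
    linarith
  · -- convergence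
    have hKto : Filter.Tendsto (fun N : ℕ =>
        (∑ x, (∑ y', p x y') * ((∑ y, (∑ x', p x' y) *
          (p x y / ((∑ y', p x y') * (∑ x', p x' y))) ^ 2) - 1)) / (↑N + 1))
        Filter.atTop (nhds 0) := by
      have h1 := (tendsto_const_div_atTop_nhds_zero_nat
        (∑ x, (∑ y', p x y') * ((∑ y, (∑ x', p x' y) *
          (p x y / ((∑ y', p x y') * (∑ x', p x' y))) ^ 2) - 1))).comp
        (Filter.tendsto_add_atTop_nat 1)
      refine h1.congr fun N => ?_
      simp only [Function.comp]
      norm_cast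
    have hDto : Filter.Tendsto (fun N : ℕ => ∑ x, (∑ y', p x y') * ∑ y,
        ((∑ x', p x' y) * (p x y / ((∑ y', p x y') * (∑ x', p x' y)))) *
        ∑ yneg : Fin N → Y, (∏ n, ∑ x', p x' (yneg n)) *
          Real.log (((p x y / ((∑ y', p x y') * (∑ x', p x' y)))
            + ∑ n, p x (yneg n) / ((∑ y', p x y') * (∑ x', p x' (yneg n))))
            / (↑N + 1))) Filter.atTop (nhds 0) :=
      squeeze_zero hD0 hDub hKto
    have hfin := (tendsto_const_nhds (x := (∑ x, ∑ y, p x y *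
        Real.log (p x y / ((∑ y', p x y') * (∑ x', p x' y)))))
        (f := Filter.atTop (α := ℕ))).sub hDto
    rw [sub_zero] at hfin
    exact hfin.congr fun N => (key N).symm
end

section
/- Minimality of the ancestor-based abstraction: in a factored MDP, if B ⊆ {1,…,d} is any subset of indices such that the abstraction s ↦ s^B is a bisimulation for reward R (which depends exactly on the coordinates in P, i.e., for each i ∈ P there exist states differing only in coordinate i with different rewards), and the dynamics dependencies are faithful (for each edge j → Pa(i) there exist contexts where changing s^j changes the distribution of s'^i), then B must contain the ancestor closure A of P. -/
lemma push_eq_prod {d : ℕ} {S : Fin d → Type} [∀ i, Fintype (S i)] [∀ i, DecidableEq (S i)]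
    (B : Finset (Fin d)) (q : (i : Fin d) → S i → ℝ)
    (hq1 : ∀ i, ∑ y, q i y = 1) (u : (k : Fin d) → S k) :
    (∑ s' ∈ Finset.univ.filter (fun s' : (k : Fin d) → S k => ∀ i ∈ B, s' i = u i),
      ∏ i, q i (s' i)) = ∏ i ∈ B, q i (u i) := by
  classical
  set g : (i : Fin d) → S i → ℝ :=
    fun i y => if i ∈ B then (if y = u i then q i y else 0) else q i y with hg
  have lhs : (∑ s' ∈ Finset.univ.filter (fun s' : (k : Fin d) → S k => ∀ i ∈ B, s' i = u i),
      ∏ i, q i (s' i)) = ∑ s' : (k : Fin d) → S k, ∏ i, g i (s' i) := by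
    rw [Finset.sum_filter]
    apply Finset.sum_congr rfl
    intro s' _
    by_cases h : ∀ i ∈ B, s' i = u i
    · rw [if_pos h]
      apply Finset.prod_congr rfl
      intro i _
      simp only [hg]
      by_cases hiB : i ∈ B
      · simp [hiB, h i hiB]
      · simp [hiB]
    · rw [if_neg h]
      push_neg at h
      obtain ⟨i, hiB, hne⟩ := h
      refine (Finset.prod_eq_zero (Finset.mem_univ i) ?_).symm
      simp [hg, hiB, hne]
  have key : ∑ s' : (k : Fin d) → S k, ∏ i, g i (s' i) = ∏ i, ∑ y, g i y :=
    (Fintype.prod_sum g).symm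
  rw [lhs, key]
  have hcol : ∀ i : Fin d, (∑ y, g i y) = if i ∈ B then q i (u i) else 1 := by
    intro i
    by_cases hiB : i ∈ B
    · simp only [hg, hiB, if_pos]
      rw [Finset.sum_ite_eq' Finset.univ (u i) (q i)]
      simp
    · simp [hg, hiB, hq1 i]
  calc ∏ i, ∑ y, g i y = ∏ i, (if i ∈ B then q i (u i) else 1) := by
        exact Finset.prod_congr rfl fun i _ => hcol i
    _ = ∏ i ∈ B, q i (u i) := by rw [Finset.prod_ite_mem, Finset.univ_inter]

/-- Minimality of the ancestor-based abstraction. In a factored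
MDP whose reward depends exactly on the coordinates in `P` and whose dynamics
dependencies are faithful (each listed parent is a necessary parent), any index
set `B` whose restriction map `s ↦ s^B` is a bisimulation for the reward must
contain the ancestor closure `Anc` of `P`. -/
theorem ancestor_abstraction_minimal
    {d : ℕ} (S : Fin d → Type) [∀ i, Fintype (S i)] [∀ i, DecidableEq (S i)]
    (A : Type) (Pa : Fin d → Finset (Fin d))
    (p : (i : Fin d) → ((j : Fin d) → S j) → A → S i → ℝ)
    (hp0 : ∀ i s a y, 0 ≤ p i s a y)
    (hp1 : ∀ i s a, ∑ y, p i s a y = 1)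
    (hPa : ∀ i (s t : (j : Fin d) → S j) (a : A),
      (∀ k ∈ Pa i, s k = t k) → p i s a = p i t a)
    -- faithfulness of the dynamics: every listed parent is necessary
    (hfaithful : ∀ i : Fin d, ∀ j ∈ Pa i,
      ∃ (a : A) (s t : (k : Fin d) → S k),
        (∀ k, k ≠ j → s k = t k) ∧ ∃ y : S i, p i s a y ≠ p i t a y)
    (P : Finset (Fin d))
    (R : ((j : Fin d) → S j) → A → ℝ)
    -- the reward depends exactly on the coordinates in P
    (hR : ∀ s t a, (∀ j ∈ P, s j = t j) → R s a = R t a)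
    (hRexact : ∀ i ∈ P, ∃ (a : A) (s t : (k : Fin d) → S k),
      (∀ k, k ≠ i → s k = t k) ∧ R s a ≠ R t a)
    -- Anc is the smallest superset of P closed under taking causal parents
    (Anc : Finset (Fin d)) (hPA : P ⊆ Anc)
    (hclosed : ∀ i ∈ Anc, Pa i ⊆ Anc)
    (hmin : ∀ B : Finset (Fin d), P ⊆ B → (∀ i ∈ B, Pa i ⊆ B) → Anc ⊆ B)
    -- B is any index set whose restriction map is a bisimulation for R
    (B : Finset (Fin d))
    (hbisimR : ∀ s t a, (∀ i ∈ B, s i = t i) → R s a = R t a)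
    (hbisimT : ∀ (s t : (k : Fin d) → S k) (a : A),
      (∀ i ∈ B, s i = t i) →
      ∀ u : (k : Fin d) → S k,
        (∑ s' ∈ Finset.univ.filter
            (fun s' : (k : Fin d) → S k => ∀ i ∈ B, s' i = u i),
          ∏ i, p i s a (s' i))
        = ∑ s' ∈ Finset.univ.filter
            (fun s' : (k : Fin d) → S k => ∀ i ∈ B, s' i = u i),
          ∏ i, p i t a (s' i)) :
    Anc ⊆ B := by
  classical
  apply hmin B
  · -- P ⊆ B
    intro i hi
    by_contra hiB
    obtain ⟨a, s, t, hst, hRne⟩ := hRexact i hi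
    exact hRne (hbisimR s t a fun k hk => hst k (fun h => hiB (h ▸ hk)))
  · -- closure under parents
    intro i hiB j hjPa
    by_contra hjB
    obtain ⟨a, s, t, hst, y, hne⟩ := hfaithful i j hjPa
    have hagree : ∀ k ∈ B, s k = t k := fun k hk => hst k (fun h => hjB (h ▸ hk))
    have hprod : ∀ u : (k : Fin d) → S k,
        (∏ k ∈ B, p k s a (u k)) = ∏ k ∈ B, p k t a (u k) := by
      intro u
      have := hbisimT s t a hagree u
      rwa [push_eq_prod B (fun k => p k s a) (fun k => hp1 k s a) u,
        push_eq_prod B (fun k => p k t a) (fun k => hp1 k t a) u] at this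
    -- choose a base point where all s-probabilities are positive
    have hex : ∀ k : Fin d, ∃ y, p k s a y ≠ 0 := by
      intro k
      obtain ⟨y', _, hy'⟩ := Finset.exists_ne_zero_of_sum_ne_zero
        (s := Finset.univ) (f := p k s a) (by rw [hp1 k s a]; exact one_ne_zero)
      exact ⟨y', hy'⟩
    choose u0 hu0 using hex
    set Cs : ℝ := ∏ k ∈ B.erase i, p k s a (u0 k) with hCs
    set Ct : ℝ := ∏ k ∈ B.erase i, p k t a (u0 k) with hCt
    have hCs_pos : 0 < Cs := by
      apply Finset.prod_pos
      intro k _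
      exact lt_of_le_of_ne (hp0 k s a (u0 k)) (Ne.symm (hu0 k))
    have hkey : ∀ z : S i, p i s a z * Cs = p i t a z * Ct := by
      intro z
      have h := hprod (Function.update u0 i z)
      have hsplit : ∀ (w : (j : Fin d) → S j),
          (∏ k ∈ B, p k w a (Function.update u0 i z k))
          = p i w a z * ∏ k ∈ B.erase i, p k w a (u0 k) := by
        intro w
        rw [← Finset.mul_prod_erase B _ hiB, Function.update_self]
        congr 1
        apply Finset.prod_congr rfl
        intro k hk
        rw [Function.update_of_ne (Finset.ne_of_mem_erase hk)]
      rw [hsplit s, hsplit t] at h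
      exact h
    have hCsCt : Cs = Ct := by
      have h1 : (∑ z, p i s a z * Cs) = ∑ z, p i t a z * Ct := by
        exact Finset.sum_congr rfl fun z _ => hkey z
      rwa [← Finset.sum_mul, ← Finset.sum_mul, hp1, hp1, one_mul, one_mul] at h1
    have := hkey y
    rw [← hCsCt] at this
    exact hne (mul_right_cancel₀ (ne_of_gt hCs_pos) this)
end

section
/- Policy values are preserved under bisimulation abstraction: if φ(s) = s^A is a bisimulation for reward R in a finite MDP, then every policy π̄ on the abstract MDP induces a policy π(s) = π̄(φ(s)) on the original MDP with identical value function: V^π(s) = V̄^{π̄}(φ(s)) for all s; consequently the optimal values of the two MDPs coincide: V*(s) = V̄*(φ(s)). -/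
lemma aux_contract {σ : Type*} [Fintype σ] [Nonempty σ] {γ : ℝ} (hγ1 : γ < 1)
    (V W : σ → ℝ)
    (h : ∀ (M : ℝ) (s : σ), (∀ t, |V t - W t| ≤ M) → |V s - W s| ≤ γ * M) :
    ∀ s, V s = W s := by
  obtain ⟨s0, -, hs0⟩ := Finset.exists_max_image Finset.univ
    (fun s => |V s - W s|) Finset.univ_nonempty
  set M := |V s0 - W s0| with hM
  have hMle : M ≤ γ * M := h M s0 (fun t => hs0 t (Finset.mem_univ t))
  have hM0 : 0 ≤ M := abs_nonneg _
  have hMz : M ≤ 0 := by nlinarith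
  intro s
  have := (hs0 s (Finset.mem_univ s)).trans hMz
  have := abs_nonneg (V s - W s)
  have : |V s - W s| = 0 := le_antisymm ‹|V s - W s| ≤ 0› ‹_›
  have := abs_eq_zero.mp this
  linarith

lemma aux_sup_diff {A : Type*} [Fintype A] [Nonempty A] (f g : A → ℝ) (c : ℝ)
    (h : ∀ a, |f a - g a| ≤ c) : |(⨆ a, f a) - ⨆ a, g a| ≤ c := by
  rw [abs_sub_le_iff]
  constructor
  · have : (⨆ a, f a) ≤ (⨆ a, g a) + c := by
      apply ciSup_le
      intro a
      have h1 := (abs_sub_le_iff.mp (h a)).1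
      have h2 : g a ≤ ⨆ a, g a := le_ciSup (Set.Finite.bddAbove (Set.finite_range g)) a
      linarith
    linarith
  · have : (⨆ a, g a) ≤ (⨆ a, f a) + c := by
      apply ciSup_le
      intro a
      have h1 := (abs_sub_le_iff.mp (h a)).2
      have h2 : f a ≤ ⨆ a, f a := le_ciSup (Set.Finite.bddAbove (Set.finite_range f)) a
      linarith
    linarith

/-- Policy values are preserved under a bisimulation abstraction
`φ(s) = s^Anc` of a finite MDP. The abstract MDP has states `X = φ(S)`, the
same actions, transitions `T̄(x'|φ(s),a) = ∑_{s' : φ(s')=x'} T(s'|s,a)` and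
rewards `R̄(φ(s),a) = R(s,a)` (well-defined by bisimulation, which these
equations encode). Every abstract policy `π̄` induces `π(s) = π̄(φ(s))` with
identical value function, and the optimal values coincide. -/
theorem bisimulation_preserves_policy_and_optimal_values
    {d : ℕ} (S : Fin d → Type) [∀ i, Fintype (S i)] [∀ i, DecidableEq (S i)]
    {A : Type} [Fintype A] [Nonempty A]
    (Anc : Finset (Fin d))
    (T : ((j : Fin d) → S j) → A → ((j : Fin d) → S j) → ℝ)
    (R : ((j : Fin d) → S j) → A → ℝ)
    (hT0 : ∀ s a s', 0 ≤ T s a s') (hT1 : ∀ s a, ∑ s', T s a s' = 1)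
    (γ : ℝ) (hγ0 : 0 ≤ γ) (hγ1 : γ < 1)
    (Tbar : ((i : {j // j ∈ Anc}) → S i.1) → A →
            ((i : {j // j ∈ Anc}) → S i.1) → ℝ)
    (Rbar : ((i : {j // j ∈ Anc}) → S i.1) → A → ℝ)
    (hTbar : ∀ (s : (j : Fin d) → S j) (a : A)
        (x' : (i : {j // j ∈ Anc}) → S i.1),
      Tbar (fun i => s i.1) a x' =
        ∑ s' ∈ Finset.univ.filter
          (fun s' : (j : Fin d) → S j =>
            (fun i : {j // j ∈ Anc} => s' i.1) = x'),
          T s a s')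
    (hRbar : ∀ (s : (j : Fin d) → S j) (a : A),
      Rbar (fun i => s i.1) a = R s a)
    (πbar : ((i : {j // j ∈ Anc}) → S i.1) → A)
    (Vpi : ((j : Fin d) → S j) → ℝ)
    (hVpi : ∀ s, Vpi s = R s (πbar fun i => s i.1) +
      γ * ∑ s', T s (πbar fun i => s i.1) s' * Vpi s')
    (Vbar : ((i : {j // j ∈ Anc}) → S i.1) → ℝ)
    (hVbar : ∀ x, Vbar x = Rbar x (πbar x) +
      γ * ∑ x', Tbar x (πbar x) x' * Vbar x')
    (Vstar : ((j : Fin d) → S j) → ℝ)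
    (hVstar : ∀ s, Vstar s =
      ⨆ a : A, (R s a + γ * ∑ s', T s a s' * Vstar s'))
    (Vbarstar : ((i : {j // j ∈ Anc}) → S i.1) → ℝ)
    (hVbarstar : ∀ x, Vbarstar x =
      ⨆ a : A, (Rbar x a + γ * ∑ x', Tbar x a x' * Vbarstar x')) :
    (∀ s, Vpi s = Vbar (fun i => s i.1)) ∧
    (∀ s, Vstar s = Vbarstar (fun i => s i.1)) := by
  rcases isEmpty_or_nonempty ((j : Fin d) → S j) with he | hne
  · exact ⟨fun s => (he.false s).elim, fun s => (he.false s).elim⟩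
  -- key sum transform: abstract sums equal concrete sums through the fibers
  have key : ∀ (s : (j : Fin d) → S j) (a : A)
      (F : ((i : {j // j ∈ Anc}) → S i.1) → ℝ),
      (∑ x', Tbar (fun i => s i.1) a x' * F x') =
        ∑ s', T s a s' * F (fun i => s' i.1) := by
    intro s a F
    simp_rw [hTbar, Finset.sum_mul]
    rw [← Finset.sum_fiberwise Finset.univ
      (fun s' : (j : Fin d) → S j => (fun i : {j // j ∈ Anc} => s' i.1))
      (fun s' => T s a s' * F (fun i => s' i.1))]
    refine Finset.sum_congr rfl fun x' _ => Finset.sum_congr rfl fun s' hs' => ?_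
    rw [Finset.mem_filter] at hs'
    rw [hs'.2]
  -- general sum-difference bound
  have sumb : ∀ (s : (j : Fin d) → S j) (a : A) (f g : ((j : Fin d) → S j) → ℝ) (M : ℝ),
      (∀ t, |f t - g t| ≤ M) →
      |(∑ s', T s a s' * f s') - ∑ s', T s a s' * g s'| ≤ M := by
    intro s a f g M hM
    rw [← Finset.sum_sub_distrib]
    calc |∑ s', (T s a s' * f s' - T s a s' * g s')|
        ≤ ∑ s', |T s a s' * f s' - T s a s' * g s'| := Finset.abs_sum_le_sum_abs _ _
      _ ≤ ∑ s', T s a s' * M := by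
          refine Finset.sum_le_sum fun s' _ => ?_
          rw [← mul_sub, abs_mul, abs_of_nonneg (hT0 s a s')]
          exact mul_le_mul_of_nonneg_left (hM s') (hT0 s a s')
      _ = M := by rw [← Finset.sum_mul, hT1, one_mul]
  constructor
  · -- policy values
    refine aux_contract hγ1 Vpi (fun s => Vbar (fun i => s i.1)) ?_
    intro M s hM
    beta_reduce
    have hW : Vbar (fun i => s i.1) = R s (πbar fun i => s i.1) +
        γ * ∑ s', T s (πbar fun i => s i.1) s' * Vbar (fun i => s' i.1) := by
      rw [hVbar, hRbar, key]
    rw [hVpi s, hW]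
    have : R s (πbar fun i => s i.1) +
        γ * ∑ s', T s (πbar fun i => s i.1) s' * Vpi s' -
        (R s (πbar fun i => s i.1) +
        γ * ∑ s', T s (πbar fun i => s i.1) s' * Vbar (fun i => s' i.1)) =
        γ * ((∑ s', T s (πbar fun i => s i.1) s' * Vpi s') -
          ∑ s', T s (πbar fun i => s i.1) s' * Vbar (fun i => s' i.1)) := by ring
    rw [this, abs_mul, abs_of_nonneg hγ0]
    exact mul_le_mul_of_nonneg_left (sumb s _ _ _ M hM) hγ0
  · -- optimal values
    refine aux_contract hγ1 Vstar (fun s => Vbarstar (fun i => s i.1)) ?_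
    intro M s hM
    beta_reduce
    have hW : Vbarstar (fun i => s i.1) =
        ⨆ a : A, (R s a + γ * ∑ s', T s a s' * Vbarstar (fun i => s' i.1)) := by
      rw [hVbarstar]
      refine iSup_congr fun a => ?_
      rw [hRbar, key]
    rw [hVstar s, hW]
    refine aux_sup_diff _ _ _ fun a => ?_
    have : R s a + γ * ∑ s', T s a s' * Vstar s' -
        (R s a + γ * ∑ s', T s a s' * Vbarstar (fun i => s' i.1)) =
        γ * ((∑ s', T s a s' * Vstar s') -
          ∑ s', T s a s' * Vbarstar (fun i => s' i.1)) := by ring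
    rw [this, abs_mul, abs_of_nonneg hγ0]
    exact mul_le_mul_of_nonneg_left (sumb s a _ _ M hM) hγ0
end

section
/- Data processing for state abstractions: if φ(s) = s^B ignores a variable j (j ∉ B) whose CMI with every next-state variable in B given the rest is zero, and j ∉ P (reward parents), then the abstract process (φ(s_t), a_t, r_t) is Markov: the joint law of (r_t, φ(s_{t+1})) given the full history depends only on (φ(s_t), a_t). -/
/-- Key factorization: the sum over full next states agreeing with `u` on `B`
of the product of factors equals the product of factors on `B` evaluated at `u`. -/
lemma factored_sum_filter
    {d : ℕ} (S : Fin d → Type) [∀ i, Fintype (S i)] [∀ i, DecidableEq (S i)]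
    (B : Finset (Fin d))
    (f : (i : Fin d) → S i → ℝ)
    (hf1 : ∀ i, ∑ y, f i y = 1)
    (u : (k : Fin d) → S k) :
    (∑ s' ∈ Finset.univ.filter
        (fun s' : (k : Fin d) → S k => ∀ i ∈ B, s' i = u i),
      ∏ i, f i (s' i)) = ∏ i ∈ B, f i (u i) := by
  classical
  set q : (i : Fin d) → S i → ℝ :=
    fun i y => if i ∈ B then (if y = u i then f i y else 0) else f i y with hq
  have hsum : ∑ s' : (k : Fin d) → S k, ∏ i, q i (s' i)
      = ∑ s' ∈ Finset.univ.filter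
          (fun s' : (k : Fin d) → S k => ∀ i ∈ B, s' i = u i),
        ∏ i, f i (s' i) := by
    rw [← Finset.sum_filter_add_sum_filter_not Finset.univ
      (fun s' : (k : Fin d) → S k => ∀ i ∈ B, s' i = u i)
      (fun s' => ∏ i, q i (s' i))]
    have h1 : ∀ s' ∈ Finset.univ.filter
        (fun s' : (k : Fin d) → S k => ∀ i ∈ B, s' i = u i),
        ∏ i, q i (s' i) = ∏ i, f i (s' i) := by
      intro s' hs'
      simp only [Finset.mem_filter] at hs'
      refine Finset.prod_congr rfl fun i _ => ?_
      by_cases hiB : i ∈ B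
      · simp [hq, hiB, hs'.2 i hiB]
      · simp [hq, hiB]
    have h2 : ∀ s' ∈ Finset.univ.filter
        (fun s' : (k : Fin d) → S k => ¬ ∀ i ∈ B, s' i = u i),
        ∏ i, q i (s' i) = 0 := by
      intro s' hs'
      simp only [Finset.mem_filter] at hs'
      push_neg at hs'
      obtain ⟨i, hiB, hne⟩ := hs'.2
      exact Finset.prod_eq_zero (Finset.mem_univ i) (by simp [hq, hiB, hne])
    rw [Finset.sum_congr rfl h1, Finset.sum_congr rfl h2]
    simp
  have hprod : ∑ s' : (k : Fin d) → S k, ∏ i, q i (s' i)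
      = ∏ i, ∑ y, q i y := (Fintype.prod_sum q).symm
  rw [← hsum, hprod]
  have : ∀ i, (∑ y, q i y) = if i ∈ B then f i (u i) else 1 := by
    intro i
    by_cases hiB : i ∈ B
    · simp [hq, hiB, Finset.sum_ite_eq' Finset.univ (u i) (f i)]
    · simp [hq, hiB, hf1 i]
  rw [Finset.prod_congr rfl (fun i _ => this i)]
  simp [Finset.prod_ite_mem]

/-- Data processing for state abstractions. In a factored MDP,
let `B` be closed under causal parents and contain the reward parents `P`, and
let `j ∉ B` be a variable that is a parent of no next-state variable in `B`
(equivalently, its CMI with every next-state variable in `B` given the rest is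
zero). Then the abstract process `(φ(s_t), a_t, r_t)` with `φ(s) = s^B` is
Markov: the joint law of `(r_t, φ(s_{t+1}))` given the full history depends
only on `(φ(s_t), a_t)`, i.e. it is the same for any two states agreeing on
`B`. -/
theorem abstract_process_markov
    {d : ℕ} (S : Fin d → Type) [∀ i, Fintype (S i)] [∀ i, DecidableEq (S i)]
    (A : Type) (Pa : Fin d → Finset (Fin d))
    (p : (i : Fin d) → ((j : Fin d) → S j) → A → S i → ℝ)
    (hp0 : ∀ i s a y, 0 ≤ p i s a y)
    (hp1 : ∀ i s a, ∑ y, p i s a y = 1)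
    (hPa : ∀ i (s t : (k : Fin d) → S k) (a : A),
      (∀ k ∈ Pa i, s k = t k) → p i s a = p i t a)
    (P B : Finset (Fin d))
    (hPB : P ⊆ B)
    (hclosed : ∀ i ∈ B, Pa i ⊆ B)
    (j : Fin d) (hjB : j ∉ B)
    (hjPa : ∀ i ∈ B, j ∉ Pa i)
    (R : ((k : Fin d) → S k) → A → ℝ)
    (hR : ∀ s t a, (∀ i ∈ P, s i = t i) → R s a = R t a) :
    ∀ (s t : (k : Fin d) → S k) (a : A),
      (∀ i ∈ B, s i = t i) →
      ∀ (ρ : ℝ) (u : (k : Fin d) → S k),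
        (if R s a = ρ then (1 : ℝ) else 0) *
          (∑ s' ∈ Finset.univ.filter
              (fun s' : (k : Fin d) → S k => ∀ i ∈ B, s' i = u i),
            ∏ i, p i s a (s' i))
        = (if R t a = ρ then (1 : ℝ) else 0) *
          (∑ s' ∈ Finset.univ.filter
              (fun s' : (k : Fin d) → S k => ∀ i ∈ B, s' i = u i),
            ∏ i, p i t a (s' i)) := by
  intro s t a hst ρ u
  have hRst : R s a = R t a := hR s t a (fun i hi => hst i (hPB hi))
  rw [hRst,
    factored_sum_filter S B (fun i => p i s a) (fun i => hp1 i s a) u,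
    factored_sum_filter S B (fun i => p i t a) (fun i => hp1 i t a) u]
  congr 1
  refine Finset.prod_congr rfl fun i hiB => ?_
  rw [hPa i s t a (fun k hk => hst k (hclosed i hiB hk))]
end
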